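/- arXiv:1812.09918 — 2 statements merged into one kernel-verified Lean document; each statement's English description precedes it below -/
import Mathlib

section
/- Let A → B and A → A' be homomorphisms of commutative rings, M a B-module, and N a natural number. Then there is a canonical isomorphism J^N((M ⊗_A A')/A') ≅ J^N(M/A) ⊗_A A', where on the left M ⊗_A A' is regarded as a module over B ⊗_A A' and its jets are taken relative to A', and on the right the tensor product uses the A-module structure of J^N(M/A) via p₁. -/
/-!
Basic infrastructure for jet algebras and jet modules, following the paper
"Basics of jet modules and algebraic linear differential operators".

For a ring homomorphism `k → A`, the diagonal ideal `I_{A/k} ⊆ A ⊗[k] A` is the kernel of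
the multiplication map; the `N`-th jet algebra is `J^N(A/k) = (A ⊗[k] A) ⧸ I_{A/k}^{N+1}`,
with its two `A`-algebra structure maps `p₁ : a ↦ a ⊗ 1` and `p₂ : a ↦ 1 ⊗ a`.
For an `A`-module `M`, `A ⊗[k] M` is a module over `A ⊗[k] A` via
`(a ⊗ b) • (x ⊗ m) = (a * x) ⊗ (b • m)`, and the `N`-th jet module is
`J^N(M/k) = (A ⊗[k] M) ⧸ I_{A/k}^{N+1} · (A ⊗[k] M)`, a module over `J^N(A/k)`,
equipped with the universal filtered derivation `d^N : M → J^N(M/k)`, `m ↦ [1 ⊗ m]`.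
-/

open scoped TensorProduct

namespace JetPaper

section Bimodule

variable (R B C M P : Type*) [CommRing R]
  [CommRing B] [Algebra R B] [CommRing C] [Algebra R C]
  [AddCommGroup M] [Module R M] [Module B M] [IsScalarTower R B M]
  [AddCommGroup P] [Module R P] [Module C P] [IsScalarTower R C P]

/-- The action of `C` on `M ⊗[R] P` through the right-hand factor, as an algebra
homomorphism into endomorphisms. -/
noncomputable def rightSMulEnd : C →ₐ[R] Module.End R (M ⊗[R] P) where
  toFun c := LinearMap.lTensor M (Algebra.lsmul R R P c)
  map_one' := LinearMap.ext fun x => by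
    induction x using TensorProduct.induction_on with
    | zero => simp
    | tmul m p => simp
    | add u v hu hv => simp only [map_add, hu, hv]
  map_mul' c c' := LinearMap.ext fun x => by
    induction x using TensorProduct.induction_on with
    | zero => simp
    | tmul m p => simp [mul_smul, Module.End.mul_apply]
    | add u v hu hv => simp only [map_add, Module.End.mul_apply] at hu hv ⊢; rw [hu, hv]
  map_zero' := LinearMap.ext fun x => by
    induction x using TensorProduct.induction_on with
    | zero => simp
    | tmul m p => simp
    | add u v hu hv => simp only [map_add, hu, hv]
  map_add' c c' := LinearMap.ext fun x => by
    induction x using TensorProduct.induction_on with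
    | zero => simp
    | tmul m p => simp [add_smul, TensorProduct.tmul_add]
    | add u v hu hv =>
        simp only [map_add, LinearMap.add_apply] at hu hv ⊢
        rw [hu, hv]
  commutes' r := LinearMap.ext fun x => by
    induction x using TensorProduct.induction_on with
    | zero => simp
    | tmul m p =>
        simp only [LinearMap.lTensor_tmul, Algebra.lsmul_coe,
          Module.algebraMap_end_apply, algebraMap_smul]
        rw [TensorProduct.tmul_smul]
    | add u v hu hv => simp only [map_add, hu, hv]

@[simp] lemma rightSMulEnd_tmul (c : C) (m : M) (p : P) :
    rightSMulEnd R C M P c (m ⊗ₜ[R] p) = m ⊗ₜ[R] (c • p) := by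
  simp [rightSMulEnd]

/-- The algebra homomorphism `B ⊗[R] C → End (M ⊗[R] P)` realizing the natural
bimodule structure `(b ⊗ c) • (m ⊗ p) = (b • m) ⊗ (c • p)`. -/
noncomputable def bimodMap : (B ⊗[R] C) →ₐ[R] Module.End R (M ⊗[R] P) :=
  Algebra.TensorProduct.lift (Algebra.lsmul R R (M ⊗[R] P)) (rightSMulEnd R C M P)
    (fun b c => show Commute _ _ from LinearMap.ext fun x => by
      induction x using TensorProduct.induction_on with
      | zero => simp [Module.End.mul_apply]
      | tmul m p => simp [Module.End.mul_apply, TensorProduct.smul_tmul']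
      | add u v hu hv =>
          simp only [Module.End.mul_apply] at hu hv ⊢
          simp only [map_add, hu, hv])

/-- The `B ⊗[R] C`-module structure on `M ⊗[R] P`, where `B` acts through the left factor
and `C` through the right one. -/
noncomputable def bimodule : Module (B ⊗[R] C) (M ⊗[R] P) :=
  Module.compHom _ (bimodMap R B C M P).toRingHom

/-- The action of `C` on `M ⊗[R] P` through the right-hand factor, as a module structure. -/
noncomputable def rightTensorModule : Module C (M ⊗[R] P) :=
  Module.compHom _ (rightSMulEnd R C M P).toRingHom

end Bimodule

section BiTensorDef

/-- Type synonym for `M ⊗[R] P`, regarded as a module over `B ⊗[R] C`, where `B` acts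
through the left factor and `C` through the right factor. -/
@[nolint unusedArguments]
def BiTensor (R B C M P : Type*) [CommRing R]
    [CommRing B] [Algebra R B] [CommRing C] [Algebra R C]
    [AddCommGroup M] [Module R M] [Module B M] [IsScalarTower R B M]
    [AddCommGroup P] [Module R P] [Module C P] [IsScalarTower R C P] : Type _ :=
  M ⊗[R] P

variable (R B C M P : Type*) [CommRing R]
  [CommRing B] [Algebra R B] [CommRing C] [Algebra R C]
  [AddCommGroup M] [Module R M] [Module B M] [IsScalarTower R B M]
  [AddCommGroup P] [Module R P] [Module C P] [IsScalarTower R C P]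

/-- The canonical (identity) map `M ⊗[R] P → BiTensor R B C M P`. -/
def BiTensor.of : M ⊗[R] P → BiTensor R B C M P := id

noncomputable instance : AddCommGroup (BiTensor R B C M P) :=
  inferInstanceAs (AddCommGroup (M ⊗[R] P))

noncomputable instance : Module R (BiTensor R B C M P) :=
  inferInstanceAs (Module R (M ⊗[R] P))

noncomputable instance : Module (B ⊗[R] C) (BiTensor R B C M P) := bimodule R B C M P

noncomputable instance : Module C (BiTensor R B C M P) := rightTensorModule R C M P

lemma BiTensor.smul_of (b : B) (c : C) (m : M) (p : P) :
    (b ⊗ₜ[R] c : B ⊗[R] C) • BiTensor.of R B C M P (m ⊗ₜ[R] p) =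
      BiTensor.of R B C M P ((b • m) ⊗ₜ[R] (c • p)) := by
  show bimodMap R B C M P (b ⊗ₜ[R] c) (m ⊗ₜ[R] p) = _
  simp only [bimodMap, Algebra.TensorProduct.lift_tmul]
  simp only [Module.End.mul_apply, TensorProduct.smul_tmul', rightSMulEnd_tmul,
    Algebra.lsmul_coe]
  rfl

lemma BiTensor.rsmul_of (c : C) (m : M) (p : P) :
    c • BiTensor.of R B C M P (m ⊗ₜ[R] p) = BiTensor.of R B C M P (m ⊗ₜ[R] (c • p)) := by
  show rightSMulEnd R C M P c (m ⊗ₜ[R] p) = _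
  simp only [rightSMulEnd_tmul]
  rfl

attribute [local instance] Algebra.TensorProduct.rightAlgebra in
instance : IsScalarTower C (B ⊗[R] C) (BiTensor R B C M P) := by
  refine IsScalarTower.of_algebraMap_smul
    (R := C) (A := B ⊗[R] C) (M := BiTensor R B C M P) fun c x => ?_
  have halg : algebraMap C (B ⊗[R] C) c = (1 : B) ⊗ₜ[R] c := rfl
  have key : ∀ y : M ⊗[R] P,
      ((1 : B) ⊗ₜ[R] c : B ⊗[R] C) • BiTensor.of R B C M P y =
        c • BiTensor.of R B C M P y := by
    intro y
    induction y using TensorProduct.induction_on with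
    | zero =>
        show ((1 : B) ⊗ₜ[R] c : B ⊗[R] C) • (0 : BiTensor R B C M P) =
          c • (0 : BiTensor R B C M P)
        rw [smul_zero, smul_zero]
    | tmul m p => rw [BiTensor.smul_of, one_smul, BiTensor.rsmul_of]
    | add u v hu hv =>
        have hadd : ∀ u v : M ⊗[R] P, BiTensor.of R B C M P (u + v) =
            BiTensor.of R B C M P u + BiTensor.of R B C M P v := fun _ _ => rfl
        rw [hadd, smul_add, smul_add, hu, hv]
  rw [halg]
  exact key x

end BiTensorDef

section JetDef

variable (k A : Type*) [CommRing k] [CommRing A] [Algebra k A]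

/-- The diagonal ideal `I_{A/k} ⊆ A ⊗[k] A`: the kernel of the multiplication map. -/
noncomputable abbrev diagIdeal : Ideal (A ⊗[k] A) := KaehlerDifferential.ideal k A

/-- The `N`-th jet algebra `J^N(A/k) = (A ⊗[k] A) ⧸ I_{A/k}^{N+1}`. -/
noncomputable abbrev JetAlg (N : ℕ) : Type _ :=
  (A ⊗[k] A) ⧸ (diagIdeal k A ^ (N + 1))

/-- The first `A`-algebra structure map `p₁ : A → J^N(A/k)`, `a ↦ a ⊗ 1`. -/
noncomputable def jetP1 (N : ℕ) : A →+* JetAlg k A N :=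
  (Ideal.Quotient.mk _).comp Algebra.TensorProduct.includeLeftRingHom

/-- The second `A`-algebra structure map `p₂ : A → J^N(A/k)`, `a ↦ 1 ⊗ a`. -/
noncomputable def jetP2 (N : ℕ) : A →+* JetAlg k A N :=
  (Ideal.Quotient.mk _).comp (Algebra.TensorProduct.includeRight : A →ₐ[k] A ⊗[k] A).toRingHom

variable (M : Type*) [AddCommGroup M] [Module k M] [Module A M] [IsScalarTower k A M]

/-- `A ⊗[k] M` is a module over `A ⊗[k] A` via `(a ⊗ b) • (x ⊗ m) = (a * x) ⊗ (b • m)`. -/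
noncomputable instance jetTensorModule : Module (A ⊗[k] A) (A ⊗[k] M) :=
  bimodule k A A A M

@[simp] lemma jet_smul_tmul (a b x : A) (m : M) :
    (a ⊗ₜ[k] b : A ⊗[k] A) • (x ⊗ₜ[k] m : A ⊗[k] M) = (a * x) ⊗ₜ[k] (b • m) := by
  show bimodMap k A A A M (a ⊗ₜ[k] b) (x ⊗ₜ[k] m) = _
  simp only [bimodMap, Algebra.TensorProduct.lift_tmul]
  simp [Module.End.mul_apply, TensorProduct.smul_tmul', smul_eq_mul]

instance jetTower1 : IsScalarTower A (A ⊗[k] A) (A ⊗[k] M) :=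
  IsScalarTower.of_algebraMap_smul fun a x => by
    have halg : algebraMap A (A ⊗[k] A) a = a ⊗ₜ[k] (1 : A) := rfl
    rw [halg]
    induction x using TensorProduct.induction_on with
    | zero => simp
    | tmul y m => rw [jet_smul_tmul, TensorProduct.smul_tmul']; simp
    | add u v hu hv => rw [smul_add, hu, hv, smul_add]

instance jetTower0 : IsScalarTower k (A ⊗[k] A) (A ⊗[k] M) :=
  IsScalarTower.of_algebraMap_smul fun r x => by
    rw [IsScalarTower.algebraMap_apply k A (A ⊗[k] A), algebraMap_smul, algebraMap_smul]

/-- The `N`-th jet module `J^N(M/k) = (A ⊗[k] M) ⧸ I_{A/k}^{N+1}·(A ⊗[k] M)`;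
it is a module over `J^N(A/k)`. -/
noncomputable abbrev JetMod (N : ℕ) : Type _ :=
  (A ⊗[k] M) ⧸ ((diagIdeal k A ^ (N + 1)) • (⊤ : Submodule (A ⊗[k] A) (A ⊗[k] M)))

/-- The universal (filtered) derivation `d^N_{M/k} : M → J^N(M/k)`, `m ↦ [1 ⊗ m]`. -/
noncomputable def jetD (N : ℕ) : M → JetMod k A M N :=
  fun m => Submodule.Quotient.mk ((1 : A) ⊗ₜ[k] m)

instance jetModTower (N : ℕ) : IsScalarTower k A (JetMod k A M N) :=
  IsScalarTower.of_algebraMap_smul fun r x => by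
    obtain ⟨y, rfl⟩ := Submodule.Quotient.mk_surjective _ x
    rw [← Submodule.Quotient.mk_smul, ← Submodule.Quotient.mk_smul, algebraMap_smul]

instance jetQuotTower (N : ℕ) : IsScalarTower A (JetAlg k A N) (JetMod k A M N) := by
  refine IsScalarTower.of_algebraMap_smul
    (R := A) (A := JetAlg k A N) (M := JetMod k A M N) fun a x => ?_
  obtain ⟨y, rfl⟩ := Submodule.Quotient.mk_surjective _ x
  have h1 : algebraMap A (JetAlg k A N) a • (Submodule.Quotient.mk y : JetMod k A M N) =
      Submodule.Quotient.mk ((algebraMap A (A ⊗[k] A) a) • y) := rfl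
  rw [h1, algebraMap_smul (A ⊗[k] A) a y, Submodule.Quotient.mk_smul]

end JetDef

end JetPaper


namespace JetPaper

attribute [local instance] Algebra.TensorProduct.rightAlgebra

/-!
Write `B' = B ⊗[A] A'` and `M' = M ⊗[A] A'`. The map `(b ⊗ x) ⊗ (m ⊗ y) ↦ (b ⊗ m) ⊗ x y`
identifies `B' ⊗[A'] M'` with `(B ⊗[A] M) ⊗[A] A'`, with inverse
`(b ⊗ m) ⊗ z ↦ z • (b ⊗ 1) ⊗ (m ⊗ 1)`. The inverse is semilinear along the ring map
`B ⊗[A] B → B' ⊗[A'] B'`, `b ⊗ c ↦ (b ⊗ 1) ⊗ (c ⊗ 1)`, which maps `I_{B/A}` onto a set of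
generators of `I_{B'/A'}`. Hence `I_{B'/A'}^{N+1} · (B' ⊗ M')` corresponds to the image of
`I_{B/A}^{N+1} · (B ⊗ M) ⊗ A'`, and right exactness of `- ⊗[A] A'` identifies the quotient
`J^N(M'/A')` with `J^N(M/A) ⊗[A] A'`.
-/

lemma rightAlgebra_smul_tmul {R S T : Type*} [CommRing R] [Ring S] [Algebra R S] [CommRing T]
    [Algebra R T] (x : T) (s : S) (t : T) : x • (s ⊗ₜ[R] t) = s ⊗ₜ (x * t) := by
  simp [Algebra.smul_def, Algebra.TensorProduct.right_algebraMap_apply]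

section TensorSquare

variable (A B A' : Type*) [CommRing A] [CommRing B] [CommRing A'] [Algebra A B] [Algebra A A']

noncomputable def tensorSquareBaseChange : B ⊗[A] B →ₐ[A] (B ⊗[A] A') ⊗[A'] (B ⊗[A] A') :=
  Algebra.TensorProduct.lift
    ((Algebra.TensorProduct.includeLeft (S := A)).comp Algebra.TensorProduct.includeLeft)
    ((Algebra.TensorProduct.includeRight.restrictScalars A).comp Algebra.TensorProduct.includeLeft)
    fun _ _ => .all _ _

@[simp] lemma tensorSquareBaseChange_tmul (b c : B) :
    tensorSquareBaseChange A B A' (b ⊗ₜ c) = (b ⊗ₜ (1 : A')) ⊗ₜ (c ⊗ₜ (1 : A')) := by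
  simp [tensorSquareBaseChange]

lemma lmul'_comp_tensorSquareBaseChange :
    ((Algebra.TensorProduct.lmul' A' (S := B ⊗[A] A')).restrictScalars A).comp
      (tensorSquareBaseChange A B A') =
    Algebra.TensorProduct.includeLeft.comp (Algebra.TensorProduct.lmul' A (S := B)) := by
  ext b <;> simp

lemma tensorSquareBaseChange_mem_diagIdeal {r : B ⊗[A] B} (hr : r ∈ diagIdeal A B) :
    tensorSquareBaseChange A B A' r ∈ diagIdeal A' (B ⊗[A] A') := by
  have := congr($(lmul'_comp_tensorSquareBaseChange A B A') r)
  simp only [AlgHom.comp_apply, AlgHom.coe_restrictScalars'] at this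
  rw [diagIdeal, RingHom.mem_ker] at hr ⊢
  simp [this, hr]

lemma map_tensorSquareBaseChange_diagIdeal :
    (diagIdeal A B).map (tensorSquareBaseChange A B A') = diagIdeal A' (B ⊗[A] A') := by
  refine le_antisymm (Ideal.map_le_iff_le_comap.mpr fun r hr =>
    tensorSquareBaseChange_mem_diagIdeal A B A' hr) ?_
  rw [diagIdeal, ← KaehlerDifferential.span_range_eq_ideal, Ideal.span_le]
  simp only [Set.range_subset_iff, SetLike.mem_coe]
  intro s
  induction s using TensorProduct.induction_on with
  | zero => simp
  | tmul b x =>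
    have hx : (b ⊗ₜ[A] x : B ⊗[A] A') = x • (b ⊗ₜ[A] 1) := by
      rw [rightAlgebra_smul_tmul, mul_one]
    have hι : tensorSquareBaseChange A B A' (1 ⊗ₜ b - b ⊗ₜ 1) =
        1 ⊗ₜ[A'] (b ⊗ₜ[A] (1 : A')) - (b ⊗ₜ[A] (1 : A')) ⊗ₜ[A'] 1 := by
      simp [Algebra.TensorProduct.one_def]
    rw [hx, TensorProduct.tmul_smul, ← TensorProduct.smul_tmul', ← smul_sub, ← hι]
    exact Submodule.smul_of_tower_mem _ x (Ideal.mem_map_of_mem _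
      (KaehlerDifferential.one_smul_sub_smul_one_mem_ideal A b))
  | add s t hs ht =>
    simpa only [TensorProduct.tmul_add, TensorProduct.add_tmul, add_sub_add_comm] using
      add_mem hs ht

lemma map_tensorSquareBaseChange_diagIdeal_pow (N : ℕ) :
    (diagIdeal A B ^ (N + 1)).map (tensorSquareBaseChange A B A') =
      diagIdeal A' (B ⊗[A] A') ^ (N + 1) := by
  rw [Ideal.map_pow, map_tensorSquareBaseChange_diagIdeal]

end TensorSquare

namespace BiTensor

variable {R B C M P : Type*} [CommRing R] [CommRing B] [Algebra R B] [CommRing C] [Algebra R C]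
  [AddCommGroup M] [Module R M] [Module B M] [IsScalarTower R B M]
  [AddCommGroup P] [Module R P] [Module C P] [IsScalarTower R C P]

@[elab_as_elim]
lemma induction_on {motive : BiTensor R B C M P → Prop} (x : BiTensor R B C M P)
    (zero : motive 0) (tmul : ∀ m p, motive (BiTensor.of R B C M P (m ⊗ₜ p)))
    (add : ∀ x y, motive x → motive y → motive (x + y)) : motive x :=
  TensorProduct.induction_on (motive := motive) x zero tmul add

instance : IsScalarTower R C (BiTensor R B C M P) :=
  IsScalarTower.of_algebraMap_smul fun r x => congr($((rightSMulEnd R C M P).commutes r) x)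

variable {M' : Type*} [AddCommGroup M'] [Module R M'] [Module B M'] [IsScalarTower R B M']

variable (B C P) in
noncomputable def baseChange (f : M →ₗ[R] M') :
    BiTensor R B C M P →ₗ[C] BiTensor R B C M' P where
  toFun := LinearMap.rTensor P f
  map_add' := map_add _
  map_smul' _ := LinearMap.congr_fun <|
    (LinearMap.rTensor_comp_lTensor _ _ _).trans (LinearMap.lTensor_comp_rTensor _ _ _).symm

@[simp] lemma baseChange_of (f : M →ₗ[R] M') (m : M) (p : P) :
    baseChange B C P f (BiTensor.of R B C M P (m ⊗ₜ p)) = BiTensor.of R B C M' P (f m ⊗ₜ p) :=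
  rfl

variable (R C P) in
noncomputable def map (f : M →ₗ[B] M') :
    BiTensor R B C M P →ₗ[B ⊗[R] C] BiTensor R B C M' P where
  toFun := baseChange B C P (f.restrictScalars R)
  map_add' := map_add _
  map_smul' s x := by
    induction s using TensorProduct.induction_on with
    | zero => simp only [zero_smul, map_zero]
    | tmul b c =>
      induction x using BiTensor.induction_on with
      | zero => simp only [smul_zero, map_zero]
      | tmul m p => simp [smul_of]
      | add x y hx hy => simp only [smul_add, map_add, hx, hy]
    | add s t hs ht => simp only [add_smul, map_add, hs, ht]

lemma map_apply (f : M →ₗ[B] M') (x : BiTensor R B C M P) :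
    map R C P f x = LinearMap.rTensor P (f.restrictScalars R) x :=
  rfl

lemma map_surjective {f : M →ₗ[B] M'} (hf : Function.Surjective f) :
    Function.Surjective (map R C P f) :=
  LinearMap.rTensor_surjective P (g := f.restrictScalars R) hf

@[simp] lemma map_of (f : M →ₗ[B] M') (m : M) (p : P) :
    map R C P f (BiTensor.of R B C M P (m ⊗ₜ p)) = BiTensor.of R B C M' P (f m ⊗ₜ p) :=
  rfl

@[elab_as_elim]
lemma induction_on_baseChange {motive : (B ⊗[R] C) ⊗[C] BiTensor R B C M C → Prop}
    (w : (B ⊗[R] C) ⊗[C] BiTensor R B C M C) (zero : motive 0)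
    (tmul : ∀ b x m y, motive ((b ⊗ₜ x) ⊗ₜ BiTensor.of R B C M C (m ⊗ₜ y)))
    (add : ∀ w w', motive w → motive w' → motive (w + w')) : motive w := by
  induction w using TensorProduct.induction_on with
  | zero => exact zero
  | tmul s t =>
    induction s using TensorProduct.induction_on with
    | zero => simpa only [TensorProduct.zero_tmul] using zero
    | tmul b x =>
      induction t using BiTensor.induction_on with
      | zero => simpa only [TensorProduct.tmul_zero] using zero
      | tmul m y => exact tmul b x m y
      | add t t' ht ht' => simpa only [TensorProduct.tmul_add] using add _ _ ht ht'
    | add s s' hs hs' => simpa only [TensorProduct.add_tmul] using add _ _ hs hs'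
  | add w w' hw hw' => exact add w w' hw hw'

end BiTensor

noncomputable abbrev jetSubmodule (k A M : Type*) [CommRing k] [CommRing A] [Algebra k A]
    [AddCommGroup M] [Module k M] [Module A M] [IsScalarTower k A M] (N : ℕ) :
    Submodule (A ⊗[k] A) (A ⊗[k] M) :=
  (diagIdeal k A ^ (N + 1)) • ⊤

section JetBaseChange

variable (A B A' M : Type*) [CommRing A] [CommRing B] [CommRing A'] [Algebra A B] [Algebra A A']
  [AddCommGroup M] [Module A M] [Module B M] [IsScalarTower A B M]

noncomputable def baseChangeTensor :
    (B ⊗[A] A') ⊗[A'] BiTensor A B A' M A' →ₗ[B ⊗[A] A'] BiTensor A B A' (B ⊗[A] M) A' :=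
  (BiTensor.baseChange B A' A' (TensorProduct.mk A B M 1)).liftBaseChange (B ⊗[A] A')

@[simp] lemma baseChangeTensor_tmul (b : B) (x : A') (m : M) (y : A') :
    baseChangeTensor A B A' M ((b ⊗ₜ x) ⊗ₜ BiTensor.of A B A' M A' (m ⊗ₜ y)) =
      BiTensor.of A B A' (B ⊗[A] M) A' ((b ⊗ₜ m) ⊗ₜ (x * y)) := by
  simp [baseChangeTensor, BiTensor.smul_of, TensorProduct.smul_tmul']

noncomputable def includeTensorBaseChange :
    B ⊗[A] M →ₗ[A] (B ⊗[A] A') ⊗[A'] BiTensor A B A' M A' :=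
  TensorProduct.lift <|
    ((TensorProduct.mk A' (B ⊗[A] A') (BiTensor A B A' M A')).restrictScalars₁₂ A A).compl₁₂
      (Algebra.TensorProduct.includeLeft (S := A)).toLinearMap ((TensorProduct.mk A M A').flip 1)

@[simp] lemma includeTensorBaseChange_tmul (b : B) (m : M) :
    includeTensorBaseChange A B A' M (b ⊗ₜ m) = (b ⊗ₜ 1) ⊗ₜ BiTensor.of A B A' M A' (m ⊗ₜ 1) :=
  rfl

noncomputable def baseChangeTensorInv :
    BiTensor A B A' (B ⊗[A] M) A' →ₗ[A] (B ⊗[A] A') ⊗[A'] BiTensor A B A' M A' :=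
  ((includeTensorBaseChange A B A' M).liftBaseChange A').restrictScalars A ∘ₗ
    (TensorProduct.comm A (B ⊗[A] M) A').toLinearMap

@[simp] lemma baseChangeTensorInv_of_tmul (t : B ⊗[A] M) (z : A') :
    baseChangeTensorInv A B A' M (BiTensor.of A B A' (B ⊗[A] M) A' (t ⊗ₜ z)) =
      z • includeTensorBaseChange A B A' M t :=
  rfl

lemma includeTensorBaseChange_smul (r : B ⊗[A] B) (t : B ⊗[A] M) :
    includeTensorBaseChange A B A' M (r • t) =
      tensorSquareBaseChange A B A' r • includeTensorBaseChange A B A' M t := by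
  induction r using TensorProduct.induction_on with
  | zero =>
    rw [map_zero, (zero_smul _ t : (0 : B ⊗[A] B) • t = 0), map_zero]
    exact (zero_smul ((B ⊗[A] A') ⊗[A'] (B ⊗[A] A')) (includeTensorBaseChange A B A' M t)).symm
  | tmul b c =>
    induction t using TensorProduct.induction_on with
    | zero => simp only [smul_zero, map_zero]
    | tmul b' m => simp [BiTensor.smul_of]
    | add t t' ht ht' => simp only [smul_add, map_add, ht, ht']
  | add r r' hr hr' => simp only [add_smul, map_add, hr, hr']

lemma baseChangeTensorInv_baseChange_smul (r : B ⊗[A] B) (ξ : BiTensor A B A' (B ⊗[A] M) A') :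
    baseChangeTensorInv A B A' M
        (BiTensor.baseChange B A' A' (DistribSMul.toLinearMap A _ r) ξ) =
      tensorSquareBaseChange A B A' r • baseChangeTensorInv A B A' M ξ := by
  induction ξ using BiTensor.induction_on with
  | zero => simp only [map_zero, smul_zero]
  | tmul t z =>
    rw [BiTensor.baseChange_of, baseChangeTensorInv_of_tmul, baseChangeTensorInv_of_tmul,
      DistribSMul.toLinearMap_apply, includeTensorBaseChange_smul, smul_comm]
  | add ξ ξ' hξ hξ' => simp only [map_add, smul_add, hξ, hξ']

lemma baseChangeTensorInv_baseChangeTensor (w : (B ⊗[A] A') ⊗[A'] BiTensor A B A' M A') :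
    baseChangeTensorInv A B A' M (baseChangeTensor A B A' M w) = w := by
  induction w using BiTensor.induction_on_baseChange with
  | zero => simp only [map_zero]
  | tmul b x m y =>
    rw [baseChangeTensor_tmul, baseChangeTensorInv_of_tmul, includeTensorBaseChange_tmul,
      TensorProduct.smul_tmul', mul_comm, mul_smul, TensorProduct.smul_tmul,
      rightAlgebra_smul_tmul, BiTensor.rsmul_of, smul_eq_mul, mul_one, mul_one]
  | add w w' hw hw' => simp only [map_add, hw, hw']

variable (N : ℕ)

lemma includeTensorBaseChange_mem_jetSubmodule {t : B ⊗[A] M} (ht : t ∈ jetSubmodule A B M N) :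
    includeTensorBaseChange A B A' M t ∈ jetSubmodule A' (B ⊗[A] A') (BiTensor A B A' M A') N := by
  refine Submodule.smul_induction_on ht (fun r hr t _ => ?_) fun t t' ht ht' => ?_
  · rw [includeTensorBaseChange_smul]
    refine Submodule.smul_mem_smul ?_ Submodule.mem_top
    rw [← map_tensorSquareBaseChange_diagIdeal_pow]
    exact Ideal.mem_map_of_mem _ hr
  · rw [map_add]
    exact add_mem ht ht'

noncomputable def jetBaseChange :
    (B ⊗[A] A') ⊗[A'] BiTensor A B A' M A' →ₗ[B ⊗[A] A'] BiTensor A B A' (JetMod A B M N) A' :=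
  BiTensor.map A A' A' ((jetSubmodule A B M N).mkQ.restrictScalars B) ∘ₗ baseChangeTensor A B A' M

lemma jetBaseChange_tmul (b : B) (x : A') (m : M) (y : A') :
    jetBaseChange A B A' M N ((b ⊗ₜ x) ⊗ₜ BiTensor.of A B A' M A' (m ⊗ₜ y)) =
      BiTensor.of A B A' (JetMod A B M N) A' (Submodule.Quotient.mk (b ⊗ₜ m) ⊗ₜ (x * y)) := by
  simp [jetBaseChange]

lemma jetBaseChange_includeTensorBaseChange (t : B ⊗[A] M) :
    jetBaseChange A B A' M N (includeTensorBaseChange A B A' M t) =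
      BiTensor.of A B A' (JetMod A B M N) A' (Submodule.Quotient.mk t ⊗ₜ 1) := by
  induction t using TensorProduct.induction_on with
  | zero => rw [map_zero, map_zero, Submodule.Quotient.mk_zero, TensorProduct.zero_tmul]; rfl
  | tmul b m => rw [includeTensorBaseChange_tmul, jetBaseChange_tmul, mul_one]
  | add t t' ht ht' =>
    rw [map_add, map_add, ht, ht', Submodule.Quotient.mk_add, TensorProduct.add_tmul]; rfl

lemma jetBaseChange_baseChangeTensorInv (ξ : BiTensor A B A' (B ⊗[A] M) A') :
    jetBaseChange A B A' M N (baseChangeTensorInv A B A' M ξ) =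
      BiTensor.map A A' A' ((jetSubmodule A B M N).mkQ.restrictScalars B) ξ := by
  induction ξ using BiTensor.induction_on with
  | zero => simp only [map_zero]
  | tmul t z =>
    rw [baseChangeTensorInv_of_tmul, LinearMap.map_smul_of_tower,
      jetBaseChange_includeTensorBaseChange, BiTensor.rsmul_of, smul_eq_mul, mul_one]
    rfl
  | add ξ ξ' hξ hξ' => simp only [map_add, hξ, hξ']

lemma jetBaseChange_surjective : Function.Surjective (jetBaseChange A B A' M N) := by
  intro y
  obtain ⟨ξ, rfl⟩ := BiTensor.map_surjective (R := A) (C := A') (P := A')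
    (f := (jetSubmodule A B M N).mkQ.restrictScalars B)
    (Submodule.mkQ_surjective (jetSubmodule A B M N)) y
  exact ⟨_, jetBaseChange_baseChangeTensorInv A B A' M N ξ⟩

lemma jetBaseChange_tensorSquareBaseChange_smul {r : B ⊗[A] B} (hr : r ∈ diagIdeal A B ^ (N + 1))
    (w : (B ⊗[A] A') ⊗[A'] BiTensor A B A' M A') :
    jetBaseChange A B A' M N (tensorSquareBaseChange A B A' r • w) = 0 := by
  rw [← baseChangeTensorInv_baseChangeTensor A B A' M w, ← baseChangeTensorInv_baseChange_smul,
    jetBaseChange_baseChangeTensorInv]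
  induction baseChangeTensor A B A' M w using BiTensor.induction_on with
  | zero => simp only [map_zero]
  | tmul t z =>
    rw [BiTensor.baseChange_of, BiTensor.map_of, LinearMap.restrictScalars_apply,
      Submodule.mkQ_apply, DistribSMul.toLinearMap_apply,
      (Submodule.Quotient.mk_eq_zero _).2 (Submodule.smul_mem_smul hr Submodule.mem_top),
      TensorProduct.zero_tmul]
    rfl
  | add ξ ξ' hξ hξ' => simp only [map_add, hξ, hξ', add_zero]

lemma jetSubmodule_le_ker_jetBaseChange :
    (jetSubmodule A' (B ⊗[A] A') (BiTensor A B A' M A') N).restrictScalars (B ⊗[A] A') ≤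
      LinearMap.ker (jetBaseChange A B A' M N) := by
  have key : ∀ r' ∈ (diagIdeal A B ^ (N + 1)).map (tensorSquareBaseChange A B A'), ∀ w,
      r' • w ∈ LinearMap.ker (jetBaseChange A B A' M N) := by
    intro r' hr'
    induction hr' using Submodule.span_induction with
    | mem _ hx =>
      obtain ⟨r, hr, rfl⟩ := hx
      exact jetBaseChange_tensorSquareBaseChange_smul A B A' M N hr
    | zero =>
      intro w
      rw [zero_smul ((B ⊗[A] A') ⊗[A'] (B ⊗[A] A')) w]
      exact zero_mem _
    | add x y _ _ hx hy =>
      intro w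
      rw [add_smul]
      exact add_mem (hx w) (hy w)
    | smul a x _ hx =>
      intro w
      rw [smul_eq_mul, mul_comm, mul_smul]
      exact hx _
  intro w hw
  rw [Submodule.restrictScalars_mem, jetSubmodule,
    ← map_tensorSquareBaseChange_diagIdeal_pow] at hw
  exact Submodule.smul_induction_on hw (fun r' hr' w _ => key r' hr' w) fun _ _ => add_mem

lemma ker_jetBaseChange_le_jetSubmodule :
    LinearMap.ker (jetBaseChange A B A' M N) ≤
      (jetSubmodule A' (B ⊗[A] A') (BiTensor A B A' M A') N).restrictScalars (B ⊗[A] A') := by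
  intro w hw
  rw [LinearMap.mem_ker, jetBaseChange, LinearMap.comp_apply, BiTensor.map_apply] at hw
  have hK : Function.Exact ((jetSubmodule A B M N).subtype.restrictScalars A)
      (((jetSubmodule A B M N).mkQ.restrictScalars B).restrictScalars A) :=
    LinearMap.exact_subtype_mkQ (jetSubmodule A B M N)
  have hex := @rTensor_exact A (jetSubmodule A B M N) (B ⊗[A] M) (JetMod A B M N) _ _ _ _ _ _ _
    ((jetSubmodule A B M N).subtype.restrictScalars A)
    (((jetSubmodule A B M N).mkQ.restrictScalars B).restrictScalars A) A' _ _ hK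
    (Submodule.mkQ_surjective (jetSubmodule A B M N))
  obtain ⟨u, hu⟩ := (hex _).1 hw
  rw [Submodule.restrictScalars_mem, ← baseChangeTensorInv_baseChangeTensor A B A' M w, ← hu]
  clear hu
  change (baseChangeTensorInv A B A' M ∘ₗ
    LinearMap.rTensor A' ((jetSubmodule A B M N).subtype.restrictScalars A)) u ∈ _
  induction u using TensorProduct.induction_on with
  | zero => rw [map_zero]; exact zero_mem _
  | tmul k z =>
    exact Submodule.smul_of_tower_mem _ z
      (includeTensorBaseChange_mem_jetSubmodule A B A' M N k.2)
  | add u u' hu hu' => rw [map_add]; exact add_mem hu hu'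

noncomputable def jetBaseChangeEquiv :
    JetMod A' (B ⊗[A] A') (BiTensor A B A' M A') N ≃ₗ[B ⊗[A] A']
      BiTensor A B A' (JetMod A B M N) A' :=
  (Submodule.Quotient.restrictScalarsEquiv (B ⊗[A] A') _).symm ≪≫ₗ
    Submodule.quotEquivOfEq _ _ (le_antisymm (jetSubmodule_le_ker_jetBaseChange A B A' M N)
      (ker_jetBaseChange_le_jetSubmodule A B A' M N)) ≪≫ₗ
    (jetBaseChange A B A' M N).quotKerEquivOfSurjective (jetBaseChange_surjective A B A' M N)

lemma jetBaseChangeEquiv_mk (w : (B ⊗[A] A') ⊗[A'] BiTensor A B A' M A') :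
    jetBaseChangeEquiv A B A' M N (Submodule.Quotient.mk w) = jetBaseChange A B A' M N w :=
  rfl

end JetBaseChange

/-- (Base change I) For ring homomorphisms `A → B`, `A → A'` and a
`B`-module `M` there is a canonical isomorphism `J^N((M ⊗[A] A')/A') ≅ J^N(M/A) ⊗[A] A'`,
where on the left `M ⊗[A] A'` is regarded as a module over `B ⊗[A] A'` (i.e. as the
bimodule `BiTensor A B A' M A'`), and on the right the tensor product uses the `A`-module
structure of `J^N(M/A)` via `p₁`. -/
theorem jet_base_change_I
    (A B A' : Type*) [CommRing A] [CommRing B] [CommRing A']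
    [Algebra A B] [Algebra A A']
    (M : Type*) [AddCommGroup M] [Module A M] [Module B M] [IsScalarTower A B M]
    (N : ℕ) :
    ∃ e : JetMod A' (B ⊗[A] A') (BiTensor A B A' M A') N ≃ₗ[B ⊗[A] A']
        BiTensor A B A' (JetMod A B M N) A',
      ∀ (b : B) (x : A') (m : M) (y : A'),
        e (Submodule.Quotient.mk
            ((b ⊗ₜ[A] x) ⊗ₜ[A'] (BiTensor.of A B A' M A' (m ⊗ₜ[A] y)))) =
          BiTensor.of A B A' (JetMod A B M N) A'
            ((Submodule.Quotient.mk (b ⊗ₜ[A] m)) ⊗ₜ[A] (x * y)) :=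
  ⟨jetBaseChangeEquiv A B A' M N, fun b x m y =>
    (jetBaseChangeEquiv_mk A B A' M N _).trans (jetBaseChange_tmul A B A' M N b x m y)⟩

end JetPaper
end

section
/- Let k → A be a homomorphism of commutative rings, N a natural number, and D : G → F a differential operator of order ≤ N relative to k between A-modules. Let π_G : G ↠ G₂ and π_F : F ↠ F₂ be surjective A-linear maps, and suppose there is a k-linear map D₂ : G₂ → F₂ with D₂ ∘ π_G = π_F ∘ D. Then D₂ is a differential operator of order ≤ N relative to k. -/
/-!
Basic infrastructure for jet algebras and jet modules, following the paper
"Basics of jet modules and algebraic linear differential operators".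

For a ring homomorphism `k → A`, the diagonal ideal `I_{A/k} ⊆ A ⊗[k] A` is the kernel of
the multiplication map; the `N`-th jet algebra is `J^N(A/k) = (A ⊗[k] A) ⧸ I_{A/k}^{N+1}`,
with its two `A`-algebra structure maps `p₁ : a ↦ a ⊗ 1` and `p₂ : a ↦ 1 ⊗ a`.
For an `A`-module `M`, `A ⊗[k] M` is a module over `A ⊗[k] A` via
`(a ⊗ b) • (x ⊗ m) = (a * x) ⊗ (b • m)`, and the `N`-th jet module is
`J^N(M/k) = (A ⊗[k] M) ⧸ I_{A/k}^{N+1} · (A ⊗[k] M)`, a module over `J^N(A/k)`,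
equipped with the universal filtered derivation `d^N : M → J^N(M/k)`, `m ↦ [1 ⊗ m]`.
-/

open scoped TensorProduct

/-!
Since `A ⊗[k] M` is the free `A`-module on `M`, a `k`-linear `D : M → P` is a differential
operator of order `≤ N` exactly when its `A`-linear extension `a ⊗ m ↦ a • D m` vanishes on
`I^{N+1} · (A ⊗[k] M)`. For `D₂` this submodule of `A ⊗[k] G₂` is the image of the corresponding
submodule of `A ⊗[k] G` under `A ⊗ π_G`, which is `A ⊗[k] A`-linear and surjective, and the
extension of `D₂` pulls back along `A ⊗ π_G` to `π_F` composed with the extension of `D`.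
-/

namespace JetPaper

section

variable {k A : Type*} [CommRing k] [CommRing A] [Algebra k A]
  {M M' P : Type*}
  [AddCommGroup M] [Module k M] [Module A M] [IsScalarTower k A M]
  [AddCommGroup M'] [Module k M'] [Module A M'] [IsScalarTower k A M']
  [AddCommGroup P] [Module k P] [Module A P] [IsScalarTower k A P]

variable (k A) in
def IsDiffOp (N : ℕ) (D : M →ₗ[k] P) : Prop :=
  ∃ Dt : JetMod k A M N →ₗ[A] P, ∀ m : M, Dt (jetD k A M N m) = D m

theorem isDiffOp_iff_liftBaseChange_eq_zero {N : ℕ} {D : M →ₗ[k] P} :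
    IsDiffOp k A N D ↔
      ∀ x ∈ (diagIdeal k A ^ (N + 1)) • (⊤ : Submodule (A ⊗[k] A) (A ⊗[k] M)),
        D.liftBaseChange A x = 0 := by
  set S := (diagIdeal k A ^ (N + 1)) • (⊤ : Submodule (A ⊗[k] A) (A ⊗[k] M))
  constructor
  · rintro ⟨Dt, hDt⟩ x hx
    have hext : D.liftBaseChange A = Dt ∘ₗ (S.mkQ.restrictScalars A) := by
      ext m
      simp [← hDt, jetD]
    rw [hext, LinearMap.comp_apply, LinearMap.restrictScalars_apply, Submodule.mkQ_apply,
      (Submodule.Quotient.mk_eq_zero S).mpr hx, map_zero]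
  · intro hD
    exact ⟨(S.restrictScalars A).liftQ (D.liftBaseChange A) hD ∘ₗ
      (Submodule.Quotient.restrictScalarsEquiv A S).symm.toLinearMap,
      D.liftBaseChange_one_tmul A⟩

theorem lTensor_restrictScalars_smul (f : M →ₗ[A] M') (t : A ⊗[k] A) (y : A ⊗[k] M) :
    (f.restrictScalars k).lTensor A (t • y) = t • (f.restrictScalars k).lTensor A y := by
  induction t using TensorProduct.induction_on with
  | zero => simp
  | add t₁ t₂ h₁ h₂ => simp only [add_smul, map_add, h₁, h₂]
  | tmul a b =>
    induction y using TensorProduct.induction_on with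
    | zero => simp
    | add y₁ y₂ h₁ h₂ => simp only [smul_add, map_add, h₁, h₂]
    | tmul x m => simp

variable (k A) in
noncomputable def jetTensorMap (f : M →ₗ[A] M') : A ⊗[k] M →ₗ[A ⊗[k] A] A ⊗[k] M' where
  __ := (f.restrictScalars k).lTensor A
  map_smul' := lTensor_restrictScalars_smul f

@[simp] theorem jetTensorMap_tmul (f : M →ₗ[A] M') (a : A) (m : M) :
    jetTensorMap k A f (a ⊗ₜ[k] m) = a ⊗ₜ[k] f m := rfl

theorem map_jetTensorMap_smul_top {f : M →ₗ[A] M'} (hf : Function.Surjective f)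
    (I : Ideal (A ⊗[k] A)) :
    (I • ⊤ : Submodule (A ⊗[k] A) (A ⊗[k] M)).map (jetTensorMap k A f) = I • ⊤ := by
  rw [Submodule.map_smul'', Submodule.map_top, LinearMap.range_eq_top.mpr]
  exact LinearMap.lTensor_surjective A (g := f.restrictScalars k) hf

theorem liftBaseChange_jetTensorMap (f : M →ₗ[A] M') (l : M' →ₗ[k] P) (x : A ⊗[k] M) :
    l.liftBaseChange A (jetTensorMap k A f x) = (l ∘ₗ f.restrictScalars k).liftBaseChange A x := by
  induction x using TensorProduct.induction_on with
  | zero => simp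
  | add x y hx hy => simp only [map_add, hx, hy]
  | tmul a m => simp

end

theorem diffop_quotient_general
    (k A : Type*) [CommRing k] [CommRing A] [Algebra k A]
    (G F G₂ F₂ : Type*)
    [AddCommGroup G] [Module k G] [Module A G] [IsScalarTower k A G]
    [AddCommGroup F] [Module k F] [Module A F] [IsScalarTower k A F]
    [AddCommGroup G₂] [Module k G₂] [Module A G₂] [IsScalarTower k A G₂]
    [AddCommGroup F₂] [Module k F₂] [Module A F₂] [IsScalarTower k A F₂]
    (N : ℕ) (D : G →ₗ[k] F)
    (Dt : JetMod k A G N →ₗ[A] F) (hD : ∀ g : G, Dt (jetD k A G N g) = D g)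
    (πG : G →ₗ[A] G₂) (πF : F →ₗ[A] F₂)
    (hπG : Function.Surjective πG)
    (D₂ : G₂ →ₗ[k] F₂) (hcomm : ∀ g : G, D₂ (πG g) = πF (D g)) :
    ∃ Dt₂ : JetMod k A G₂ N →ₗ[A] F₂, ∀ g₂ : G₂, Dt₂ (jetD k A G₂ N g₂) = D₂ g₂ := by
  have hD_vanishes := isDiffOp_iff_liftBaseChange_eq_zero.mp ⟨Dt, hD⟩
  have hsquare : D₂ ∘ₗ πG.restrictScalars k = πF.restrictScalars k ∘ₗ D :=
    LinearMap.ext hcomm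
  refine isDiffOp_iff_liftBaseChange_eq_zero.mpr fun y hy => ?_
  rw [← map_jetTensorMap_smul_top hπG] at hy
  obtain ⟨x, hx, rfl⟩ := hy
  rw [liftBaseChange_jetTensorMap, hsquare, ← LinearMap.liftBaseChange_comp,
    LinearMap.comp_apply, hD_vanishes x hx, map_zero]

/-- Let `D : G → F` be a differential operator of order `≤ N` relative to
`k`, let `π_G : G ↠ G₂` and `π_F : F ↠ F₂` be surjective `A`-linear maps, and suppose the
`k`-linear map `D₂ : G₂ → F₂` satisfies `D₂ ∘ π_G = π_F ∘ D`. Then `D₂` is a differential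
operator of order `≤ N` relative to `k`. -/
theorem diffop_quotient
    (k A : Type*) [CommRing k] [CommRing A] [Algebra k A]
    (G F G₂ F₂ : Type*)
    [AddCommGroup G] [Module k G] [Module A G] [IsScalarTower k A G]
    [AddCommGroup F] [Module k F] [Module A F] [IsScalarTower k A F]
    [AddCommGroup G₂] [Module k G₂] [Module A G₂] [IsScalarTower k A G₂]
    [AddCommGroup F₂] [Module k F₂] [Module A F₂] [IsScalarTower k A F₂]
    (N : ℕ) (D : G →ₗ[k] F)
    (Dt : JetMod k A G N →ₗ[A] F) (hD : ∀ g : G, Dt (jetD k A G N g) = D g)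
    (πG : G →ₗ[A] G₂) (πF : F →ₗ[A] F₂)
    (hπG : Function.Surjective πG) (hπF : Function.Surjective πF)
    (D₂ : G₂ →ₗ[k] F₂) (hcomm : ∀ g : G, D₂ (πG g) = πF (D g)) :
    ∃ Dt₂ : JetMod k A G₂ N →ₗ[A] F₂, ∀ g₂ : G₂, Dt₂ (jetD k A G₂ N g₂) = D₂ g₂ :=
  diffop_quotient_general k A G F G₂ F₂ N D Dt hD πG πF hπG D₂ hcomm

end JetPaper
end
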